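/- Let (Z_{ij})_{(i,j)∈ℕ²} be a separately exchangeable and dissociated array of random vectors in ℝ^d, let f : ℝ^d → ℝ be Borel measurable with E[f(Z_{11})²] ≤ K for a constant K ≥ 0, and let N, M ≥ 1 be integers with C := min(N,M). Then Var((NM)^{-1} · Σ_{i=1}^N Σ_{j=1}^M f(Z_{ij})) ≤ 3K/C. -/

import Mathlib

/-!
Write `X i j = f (Z i j)`. By separate exchangeability all `X i j` have the law of `X 1 1`, and
`(X i j, X k l)` has the law of `(X 1 1, X 2 2)` whenever `i ≠ k` and `j ≠ l`; by dissociation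
`X 1 1` and `X 2 2` are independent. Expanding the variance of `∑ X i j` as a double sum of
covariances, only the pairs of indices sharing a row or a column contribute, each by at most
`Var (X 1 1) ≤ K`, and there are at most `N M (N + M)` of them. Hence the variance of the
average is at most `(1/N + 1/M) K ≤ 2K/C`.
-/

open MeasureTheory ProbabilityTheory

/-- An array `Z` of random vectors is separately exchangeable if relabeling rows
and columns by permutations leaves the joint law unchanged. -/
def SepExch {Ω E : Type*} [MeasurableSpace Ω] [MeasurableSpace E]
    (P : Measure Ω) (Z : ℕ → ℕ → Ω → E) : Prop :=
  ∀ π₁ π₂ : Equiv.Perm ℕ,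
    Measure.map (fun ω => fun p : ℕ × ℕ => Z (π₁ p.1) (π₂ p.2) ω) P =
      Measure.map (fun ω => fun p : ℕ × ℕ => Z p.1 p.2 ω) P

/-- An array `Z` is dissociated if for every `(c₁,c₂)` the upper-left block
`(Z_{ij})_{i≤c₁, j≤c₂}` is independent of the lower-right block
`(Z_{ij})_{i>c₁, j>c₂}`. -/
def Dissociated {Ω E : Type*} [MeasurableSpace Ω] [MeasurableSpace E]
    (P : Measure Ω) (Z : ℕ → ℕ → Ω → E) : Prop :=
  ∀ c₁ c₂ : ℕ,
    IndepFun
      (fun ω => fun p : {i : ℕ // i ≤ c₁} × {j : ℕ // j ≤ c₂} => Z p.1 p.2 ω)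
      (fun ω => fun p : {i : ℕ // c₁ < i} × {j : ℕ // c₂ < j} => Z p.1 p.2 ω) P

/-- Variance `Var(X) = E[X²] − (E[X])²`. -/
noncomputable def var {Ω : Type*} [MeasurableSpace Ω] (P : Measure Ω) (X : Ω → ℝ) : ℝ :=
  (∫ ω, (X ω) ^ 2 ∂P) - (∫ ω, X ω ∂P) ^ 2

open Finset

lemma exists_perm_apply_one_apply_two {i k : ℕ} (h : i ≠ k) :
    ∃ π : Equiv.Perm ℕ, π 1 = i ∧ π 2 = k := by
  refine ⟨(Equiv.swap 2 (Equiv.swap 1 i k)).trans (Equiv.swap 1 i), ?_, ?_⟩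
  · have h1 : (1 : ℕ) ≠ Equiv.swap 1 i k := fun hc => h <| by
      simpa using congrArg (Equiv.swap 1 i) hc
    simp [Equiv.swap_apply_of_ne_of_ne (by norm_num : (1 : ℕ) ≠ 2) h1]
  · simp

section Array

variable {Ω E : Type*} [MeasurableSpace Ω] [MeasurableSpace E] {P : Measure Ω}
  {Z : ℕ → ℕ → Ω → E}

lemma SepExch.identDistrib_perm (hexch : SepExch P Z) (hZ : ∀ i j, Measurable (Z i j))
    (π₁ π₂ : Equiv.Perm ℕ) :
    IdentDistrib (fun ω (p : ℕ × ℕ) => Z (π₁ p.1) (π₂ p.2) ω) (fun ω p => Z p.1 p.2 ω)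
      P P where
  aemeasurable_fst := (measurable_pi_lambda _ fun _ => hZ _ _).aemeasurable
  aemeasurable_snd := (measurable_pi_lambda _ fun _ => hZ _ _).aemeasurable
  map_eq := hexch π₁ π₂

lemma SepExch.identDistrib_entry (hexch : SepExch P Z) (hZ : ∀ i j, Measurable (Z i j))
    (i j : ℕ) : IdentDistrib (Z i j) (Z 1 1) P P := by
  simpa [Function.comp_def] using
    (hexch.identDistrib_perm hZ (Equiv.swap 1 i) (Equiv.swap 1 j)).comp
      (measurable_pi_apply (1, 1))

lemma SepExch.identDistrib_pair (hexch : SepExch P Z) (hZ : ∀ i j, Measurable (Z i j))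
    {i j k l : ℕ} (hik : i ≠ k) (hjl : j ≠ l) :
    IdentDistrib (fun ω => (Z 1 1 ω, Z 2 2 ω)) (fun ω => (Z i j ω, Z k l ω)) P P := by
  obtain ⟨π₁, rfl, rfl⟩ := exists_perm_apply_one_apply_two hik
  obtain ⟨π₂, rfl, rfl⟩ := exists_perm_apply_one_apply_two hjl
  exact ((hexch.identDistrib_perm hZ π₁ π₂).comp
    ((measurable_pi_apply (1, 1)).prodMk (measurable_pi_apply (2, 2)))).symm

lemma Dissociated.indepFun_one_one_two_two (hdiss : Dissociated P Z) :
    IndepFun (Z 1 1) (Z 2 2) P :=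
  (hdiss 1 1).comp
    (measurable_pi_apply ((⟨1, le_rfl⟩, ⟨1, le_rfl⟩) : {i // i ≤ 1} × {j // j ≤ 1}))
    (measurable_pi_apply ((⟨2, one_lt_two⟩, ⟨2, one_lt_two⟩) : {i // 1 < i} × {j // 1 < j}))

lemma SepExch.indepFun_of_ne [IsFiniteMeasure P] (hexch : SepExch P Z)
    (hdiss : Dissociated P Z) (hZ : ∀ i j, Measurable (Z i j))
    {i j k l : ℕ} (hik : i ≠ k) (hjl : j ≠ l) : IndepFun (Z i j) (Z k l) P :=
  indepFun_of_identDistrib_pair hdiss.indepFun_one_one_two_two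
    (hexch.identDistrib_pair hZ hik hjl)

end Array

section Moments

variable {Ω : Type*} [MeasurableSpace Ω] {P : Measure Ω}

lemma two_mul_covariance_le_variance_add_variance [IsFiniteMeasure P] {X Y : Ω → ℝ}
    (hX : MemLp X 2 P) (hY : MemLp Y 2 P) : 2 * cov[X, Y; P] ≤ Var[X; P] + Var[Y; P] := by
  have := variance_nonneg (X - Y) P
  rw [variance_sub hX hY] at this
  linarith

lemma var_eq_variance [IsProbabilityMeasure P] {X : Ω → ℝ} (hX : MemLp X 2 P) :
    var P X = Var[X; P] :=
  (variance_eq_sub hX).symm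

lemma sum_sum_sum_sum_le_of_eq_zero_of_ne {ι κ : Type*} (A : Finset ι) (B : Finset κ)
    {g : ι → κ → ι → κ → ℝ} {v : ℝ} (hv : 0 ≤ v) (hle : ∀ a b a' b', g a b a' b' ≤ v)
    (hzero : ∀ a b a' b', a ≠ a' → b ≠ b' → g a b a' b' = 0) :
    ∑ a ∈ A, ∑ b ∈ B, ∑ a' ∈ A, ∑ b' ∈ B, g a b a' b' ≤ #A * #B * (#A + #B) * v := by
  classical
  have hsplit : ∀ a b a' b',
      g a b a' b' ≤ (if a = a' then v else 0) + (if b = b' then v else 0) := by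
    intro a b a' b'
    have := hle a b a' b'
    split_ifs with ha hb hb
    · linarith
    · linarith
    · linarith
    · rw [hzero a b a' b' ha hb, add_zero]
  calc ∑ a ∈ A, ∑ b ∈ B, ∑ a' ∈ A, ∑ b' ∈ B, g a b a' b'
      ≤ ∑ a ∈ A, ∑ b ∈ B, ∑ a' ∈ A, ∑ b' ∈ B,
          ((if a = a' then v else 0) + (if b = b' then v else 0)) := by
        gcongr with a _ b _ a' _ b' _
        exact hsplit a b a' b'
    _ = ∑ a ∈ A, ∑ b ∈ B, (#B * v + #A * v) := by
        refine sum_congr rfl fun a ha => sum_congr rfl fun b hb => ?_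
        simp [sum_add_distrib, ha, hb]
    _ = #A * #B * (#A + #B) * v := by
        simp only [sum_const, nsmul_eq_mul]
        ring

lemma variance_sum_sum_le [IsFiniteMeasure P] {ι κ : Type*} (A : Finset ι) (B : Finset κ)
    {X : ι → κ → Ω → ℝ} {v : ℝ} (hX : ∀ a b, MemLp (X a b) 2 P) (hv : 0 ≤ v)
    (hle : ∀ a b a' b', cov[X a b, X a' b'; P] ≤ v)
    (hzero : ∀ a b a' b', a ≠ a' → b ≠ b' → cov[X a b, X a' b'; P] = 0) :
    Var[fun ω => ∑ a ∈ A, ∑ b ∈ B, X a b ω; P] ≤ #A * #B * (#A + #B) * v := by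
  simp_rw [← sum_product']
  rw [variance_fun_sum' fun p _ => hX p.1 p.2]
  simpa only [sum_product] using
    sum_sum_sum_sum_le_of_eq_zero_of_ne A B hv hle hzero

end Moments

section ArrayMoments

variable {Ω E : Type*} [MeasurableSpace Ω] [MeasurableSpace E] {P : Measure Ω}
  {Z : ℕ → ℕ → Ω → E} {f : E → ℝ}

lemma SepExch.memLp_comp (hexch : SepExch P Z) (hZ : ∀ i j, Measurable (Z i j))
    (hf : Measurable f) (h11 : MemLp (fun ω => f (Z 1 1 ω)) 2 P) (i j : ℕ) :
    MemLp (fun ω => f (Z i j ω)) 2 P :=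
  ((hexch.identDistrib_entry hZ i j).comp hf).memLp_iff.mpr h11

lemma SepExch.covariance_comp_le [IsFiniteMeasure P] (hexch : SepExch P Z)
    (hZ : ∀ i j, Measurable (Z i j)) (hf : Measurable f)
    (h11 : MemLp (fun ω => f (Z 1 1 ω)) 2 P) (i j k l : ℕ) :
    cov[fun ω => f (Z i j ω), fun ω => f (Z k l ω); P] ≤ Var[fun ω => f (Z 1 1 ω); P] := by
  have hvar : ∀ i j, Var[fun ω => f (Z i j ω); P] = Var[fun ω => f (Z 1 1 ω); P] :=
    fun i j => ((hexch.identDistrib_entry hZ i j).comp hf).variance_eq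
  have := two_mul_covariance_le_variance_add_variance
    (hexch.memLp_comp hZ hf h11 i j) (hexch.memLp_comp hZ hf h11 k l)
  rw [hvar i j, hvar k l] at this
  linarith

lemma SepExch.covariance_comp_eq_zero [IsFiniteMeasure P] (hexch : SepExch P Z)
    (hdiss : Dissociated P Z) (hZ : ∀ i j, Measurable (Z i j)) (hf : Measurable f)
    (h11 : MemLp (fun ω => f (Z 1 1 ω)) 2 P) {i j k l : ℕ} (hik : i ≠ k) (hjl : j ≠ l) :
    cov[fun ω => f (Z i j ω), fun ω => f (Z k l ω); P] = 0 :=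
  ((hexch.indepFun_of_ne hdiss hZ hik hjl).comp hf hf).covariance_eq_zero
    (hexch.memLp_comp hZ hf h11 i j) (hexch.memLp_comp hZ hf h11 k l)

end ArrayMoments

lemma inv_mul_sq_mul_mul_add_le (N M : ℕ) :
    ((N : ℝ) * M)⁻¹ ^ 2 * (N * M * (N + M)) ≤ 2 / (min N M : ℕ) := by
  rcases N.eq_zero_or_pos with rfl | hN
  · simp
  rcases M.eq_zero_or_pos with rfl | hM
  · simp
  have hC : (0 : ℝ) < (min N M : ℕ) := by positivity
  calc ((N : ℝ) * M)⁻¹ ^ 2 * (N * M * (N + M)) = 1 / (N : ℝ) + 1 / M := by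
        field_simp
        ring
    _ ≤ 1 / (min N M : ℕ) + 1 / (min N M : ℕ) := by
        gcongr
        · exact_mod_cast min_le_left N M
        · exact_mod_cast min_le_right N M
    _ = 2 / (min N M : ℕ) := by ring

theorem stmt14_general
    {Ω : Type*} [MeasurableSpace Ω] (P : Measure Ω) [IsProbabilityMeasure P]
    (d : ℕ) (Z : ℕ → ℕ → Ω → (Fin d → ℝ))
    (hmeas : ∀ i j, Measurable (Z i j))
    (hexch : SepExch P Z) (hdiss : Dissociated P Z)
    (f : (Fin d → ℝ) → ℝ) (hf : Measurable f)
    (K : ℝ)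
    (hint : Integrable (fun ω => (f (Z 1 1 ω)) ^ 2) P)
    (hbound : ∫ ω, (f (Z 1 1 ω)) ^ 2 ∂P ≤ K)
    (N M : ℕ)
    (C : ℕ) (hC : C = min N M) :
    var P (fun ω => ((N : ℝ) * (M : ℝ))⁻¹ *
        ∑ i ∈ Finset.Icc 1 N, ∑ j ∈ Finset.Icc 1 M, f (Z i j ω))
      ≤ 3 * K / C := by
  subst hC
  have h11 : MemLp (fun ω => f (Z 1 1 ω)) 2 P :=
    (memLp_two_iff_integrable_sq (hf.comp (hmeas 1 1)).aestronglyMeasurable).2 hint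
  have hX : ∀ i j, MemLp (fun ω => f (Z i j ω)) 2 P := hexch.memLp_comp hmeas hf h11
  have hK : 0 ≤ K := (integral_nonneg fun ω => sq_nonneg _).trans hbound
  have hσ : Var[fun ω => f (Z 1 1 ω); P] ≤ K :=
    (variance_le_expectation_sq h11.aestronglyMeasurable).trans hbound
  have hsum : Var[fun ω => ∑ i ∈ Icc 1 N, ∑ j ∈ Icc 1 M, f (Z i j ω); P]
      ≤ N * M * (N + M) * Var[fun ω => f (Z 1 1 ω); P] := by
    simpa using variance_sum_sum_le (Icc 1 N) (Icc 1 M) hX (variance_nonneg _ _)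
      (hexch.covariance_comp_le hmeas hf h11)
      (fun _ _ _ _ => hexch.covariance_comp_eq_zero hdiss hmeas hf h11)
  have hS : MemLp (fun ω => ∑ i ∈ Icc 1 N, ∑ j ∈ Icc 1 M, f (Z i j ω)) 2 P :=
    memLp_finsetSum _ fun i _ => memLp_finsetSum _ fun j _ => hX i j
  rw [var_eq_variance (hS.const_mul _), variance_const_mul]
  calc ((N : ℝ) * M)⁻¹ ^ 2 * Var[fun ω => ∑ i ∈ Icc 1 N, ∑ j ∈ Icc 1 M, f (Z i j ω); P]
      ≤ ((N : ℝ) * M)⁻¹ ^ 2 * (N * M * (N + M)) * Var[fun ω => f (Z 1 1 ω); P] := by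
        rw [mul_assoc]
        gcongr
    _ ≤ 2 / (min N M : ℕ) * K :=
        mul_le_mul (inv_mul_sq_mul_mul_add_le N M) hσ (variance_nonneg _ _) (by positivity)
    _ ≤ 3 * K / (min N M : ℕ) := by
        rw [div_mul_eq_mul_div]
        gcongr
        linarith

/-- **Variance bound for the empirical average of a separately exchangeable,
dissociated array**: if `E[f(Z_{11})²] ≤ K` then
`Var((NM)^{-1}·Σᵢ Σⱼ f(Z_{ij})) ≤ 3K/C` with `C = min(N,M)`. -/
theorem stmt14
    {Ω : Type*} [MeasurableSpace Ω] (P : Measure Ω) [IsProbabilityMeasure P]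
    (d : ℕ) (Z : ℕ → ℕ → Ω → (Fin d → ℝ))
    (hmeas : ∀ i j, Measurable (Z i j))
    (hexch : SepExch P Z) (hdiss : Dissociated P Z)
    (f : (Fin d → ℝ) → ℝ) (hf : Measurable f)
    (K : ℝ) (hK : 0 ≤ K)
    (hint : Integrable (fun ω => (f (Z 1 1 ω)) ^ 2) P)
    (hbound : ∫ ω, (f (Z 1 1 ω)) ^ 2 ∂P ≤ K)
    (N M : ℕ) (hN : 1 ≤ N) (hM : 1 ≤ M)
    (C : ℕ) (hC : C = min N M) :
    var P (fun ω => ((N : ℝ) * (M : ℝ))⁻¹ *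
        ∑ i ∈ Finset.Icc 1 N, ∑ j ∈ Finset.Icc 1 M, f (Z i j ω))
      ≤ 3 * K / C :=
  stmt14_general P d Z hmeas hexch hdiss f hf K hint hbound N M C hC
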